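/- For all real s, (1/4)·Σ_{ℓ=1}^∞ (tanh²(2s)/4)^ℓ · binom(2ℓ, ℓ)/ℓ = (1/2)·log(cosh(2s)) - log(cosh(s)). -/

import Mathlib

/-!
With `z = tanh² (2s) / 4` one has `√(1 - 4z) = 1 / cosh (2s)`, so the identity is the classical
series `∑_{n ≥ 1} C(2n, n) zⁿ / n = 2 log (2 / (1 + √(1 - 4z)))` combined with
`1 + 1 / cosh (2s) = 2 cosh² s / cosh (2s)`. The series is obtained by integrating the central
binomial generating function `∑ C(2n, n) zⁿ = 1 / √(1 - 4z)`, which is the binomial series of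
`(1 - x)^(-1/2)` at `x = 4z` because `(1/2)(3/2)⋯(n - 1/2) / n! = C(2n, n) / 4ⁿ`.
-/

open Real Set
open scoped Nat

theorem Ring.multichoose_one_half {K : Type*} [Field K] [CharZero K] (n : ℕ) :
    Ring.multichoose (1 / 2 : K) n = Nat.centralBinom n / 4 ^ n := by
  have hpoch : (ascPochhammer K n).eval (1 / 2 : K) = Nat.centralBinom n * n ! / 4 ^ n := by
    induction n with
    | zero => simp
    | succ n ih =>
      have h : ((n + 1 : ℕ) : K) * Nat.centralBinom (n + 1) =
          2 * (2 * n + 1) * Nat.centralBinom n := by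
        exact_mod_cast Nat.succ_mul_centralBinom_succ n
      rw [ascPochhammer_succ_eval, ih, Nat.factorial_succ, Nat.cast_mul, pow_succ]
      push_cast at h ⊢
      linear_combination (-(n ! / 4 ^ n / 4) : K) * h
  apply mul_left_cancel₀ (Nat.cast_ne_zero.2 n.factorial_ne_zero : (n ! : K) ≠ 0)
  rw [← nsmul_eq_mul, Ring.factorial_nsmul_multichoose_eq_ascPochhammer,
    Polynomial.ascPochhammer_smeval_eq_eval, hpoch]
  ring

theorem hasSum_centralBinom_mul_pow {z : ℝ} (hz : |z| < 1 / 4) :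
    HasSum (fun n ↦ (Nat.centralBinom n : ℝ) * z ^ n) (√(1 - 4 * z))⁻¹ := by
  have hmem : 4 * z ∈ Metric.eball (0 : ℝ) 1 := by
    rw [Metric.mem_eball, edist_dist, ENNReal.ofReal_lt_one, dist_zero_right, norm_mul,
      Real.norm_eq_abs, Real.norm_eq_abs, abs_of_pos four_pos]
    linarith
  have h := (one_div_one_sub_rpow_hasFPowerSeriesOnBall_zero (1 / 2)).hasSum hmem
  simp only [FormalMultilinearSeries.ofScalars_apply_eq, ← Ring.multichoose_eq,
    Ring.multichoose_one_half, smul_eq_mul, zero_add] at h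
  rw [← sqrt_eq_rpow, one_div] at h
  have hterm (n : ℕ) :
      (Nat.centralBinom n : ℝ) / 4 ^ n * (4 * z) ^ n = Nat.centralBinom n * z ^ n := by
    rw [mul_pow]
    field_simp
  simpa only [hterm] using h

theorem hasSum_centralBinom_succ_mul_pow {z : ℝ} (hz : |z| < 1 / 4) :
    HasSum (fun n ↦ (Nat.centralBinom (n + 1) : ℝ) * z ^ n)
      (4 / (√(1 - 4 * z) * (1 + √(1 - 4 * z)))) := by
  rcases eq_or_ne z 0 with rfl | hz0
  · norm_num
    refine (hasSum_ite_eq 0 (2 : ℝ)).congr_fun fun n ↦ ?_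
    cases n <;> simp [Nat.centralBinom, Nat.choose]
  have hw : 0 < √(1 - 4 * z) := sqrt_pos.2 (by linarith [le_abs_self z])
  have hw2 : √(1 - 4 * z) ^ 2 = 1 - 4 * z := sq_sqrt (by linarith [le_abs_self z])
  have h := ((hasSum_nat_add_iff' 1).2 (hasSum_centralBinom_mul_pow hz)).div_const z
  have hval : ((√(1 - 4 * z))⁻¹ - ∑ i ∈ Finset.range 1, (Nat.centralBinom i : ℝ) * z ^ i) / z
      = 4 / (√(1 - 4 * z) * (1 + √(1 - 4 * z))) := by
    simp only [Finset.sum_range_one, Nat.centralBinom_zero, pow_zero, Nat.cast_one, mul_one]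
    field_simp
    linear_combination -hw2
  rw [hval] at h
  exact h.congr_fun fun n ↦ by field_simp; ring

theorem hasDerivAt_two_mul_log_two_div_one_add_sqrt {z : ℝ} (hz : z < 1 / 4) :
    HasDerivAt (fun y ↦ 2 * log (2 / (1 + √(1 - 4 * y))))
      (4 / (√(1 - 4 * z) * (1 + √(1 - 4 * z)))) z := by
  have hw : 0 < √(1 - 4 * z) := sqrt_pos.2 (by linarith)
  have hsqrt : HasDerivAt (fun y ↦ √(1 - 4 * y)) (-4 / (2 * √(1 - 4 * z))) z := by
    have h := (((hasDerivAt_id z).const_mul 4).const_sub 1).sqrt (by simp; linarith)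
    simpa using h
  have h := (((hasDerivAt_const z (2 : ℝ)).fun_div (hsqrt.const_add 1) (by positivity)).log
    (by positivity)).const_mul 2
  refine h.congr_deriv ?_
  field_simp
  ring

theorem norm_centralBinom_succ_mul_pow_le {r y : ℝ} (hy : |y| ≤ r) (n : ℕ) :
    ‖(Nat.centralBinom (n + 1) : ℝ) * y ^ n‖ ≤ 4 * (4 * r) ^ n := by
  rw [norm_mul, norm_pow, Real.norm_natCast, Real.norm_eq_abs, mul_pow, ← mul_assoc, ← pow_succ']
  gcongr
  exact_mod_cast Nat.centralBinom_le_four_pow (n + 1)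

theorem hasSum_centralBinom_succ_div_mul_pow {z : ℝ} (hz : |z| < 1 / 4) :
    HasSum (fun n ↦ (Nat.centralBinom (n + 1) : ℝ) / (n + 1) * z ^ (n + 1))
      (2 * log (2 / (1 + √(1 - 4 * z)))) := by
  obtain ⟨r, hzr, hr⟩ := exists_between hz
  have hzt : z ∈ Ioo (-r) r := abs_lt.1 hzr
  have h0t : (0 : ℝ) ∈ Ioo (-r) r := ⟨by linarith [abs_nonneg z], by linarith [abs_nonneg z]⟩
  have hterm (n : ℕ) (y : ℝ) :
      HasDerivAt (fun y ↦ (Nat.centralBinom (n + 1) : ℝ) / (n + 1) * y ^ (n + 1))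
        ((Nat.centralBinom (n + 1) : ℝ) * y ^ n) y := by
    refine ((hasDerivAt_pow (n + 1) y).const_mul _).congr_deriv ?_
    push_cast
    field_simp
  have hbound (n : ℕ) (y : ℝ) (hy : y ∈ Ioo (-r) r) :
      ‖(Nat.centralBinom (n + 1) : ℝ) * y ^ n‖ ≤ 4 * (4 * r) ^ n :=
    norm_centralBinom_succ_mul_pow_le (abs_lt.2 hy).le n
  have hgeom : Summable fun n : ℕ ↦ 4 * (4 * r) ^ n :=
    (summable_geometric_of_lt_one (by linarith [abs_nonneg z]) (by linarith)).mul_left 4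
  have hsum0 : Summable fun n : ℕ ↦ (Nat.centralBinom (n + 1) : ℝ) / (n + 1) * 0 ^ (n + 1) := by
    simp
  have hF (y : ℝ) (hy : y ∈ Ioo (-r) r) :
      HasDerivAt (fun y ↦ ∑' n : ℕ, (Nat.centralBinom (n + 1) : ℝ) / (n + 1) * y ^ (n + 1))
        (4 / (√(1 - 4 * y) * (1 + √(1 - 4 * y)))) y := by
    rw [← (hasSum_centralBinom_succ_mul_pow ((abs_lt.2 hy).trans hr)).tsum_eq]
    exact hasDerivAt_tsum_of_isPreconnected hgeom isOpen_Ioo isPreconnected_Ioo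
      (fun n y _ ↦ hterm n y) hbound h0t hsum0 hy
  have hG (y : ℝ) (hy : y ∈ Ioo (-r) r) :=
    hasDerivAt_two_mul_log_two_div_one_add_sqrt (show y < 1 / 4 by linarith [hy.2])
  have heq := isOpen_Ioo.eqOn_of_deriv_eq isPreconnected_Ioo
    (fun y hy ↦ (hF y hy).differentiableAt.differentiableWithinAt)
    (fun y hy ↦ (hG y hy).differentiableAt.differentiableWithinAt)
    (fun y hy ↦ (hF y hy).deriv.trans (hG y hy).deriv.symm) h0t (by norm_num)
  have hFz : ∑' n : ℕ, (Nat.centralBinom (n + 1) : ℝ) / (n + 1) * z ^ (n + 1)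
      = 2 * log (2 / (1 + √(1 - 4 * z))) := heq hzt
  exact hFz ▸ (summable_of_summable_hasDerivAt_of_isPreconnected hgeom isOpen_Ioo
    isPreconnected_Ioo (fun n y _ ↦ hterm n y) hbound h0t hsum0 hzt).hasSum

theorem Real.sqrt_one_sub_tanh_sq (x : ℝ) : √(1 - tanh x ^ 2) = (cosh x)⁻¹ := by
  have hc := cosh_pos x
  rw [← sqrt_sq (inv_pos.2 hc).le, tanh_eq_sinh_div_cosh]
  congr 1
  field_simp
  linear_combination cosh_sq_sub_sinh_sq x

theorem Real.log_two_div_one_add_sqrt_one_sub_tanh_two_mul_sq (x : ℝ) :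
    log (2 / (1 + √(1 - tanh (2 * x) ^ 2))) = log (cosh (2 * x)) - 2 * log (cosh x) := by
  have hc := cosh_pos x
  have hc2 := cosh_pos (2 * x)
  have hcosh : 2 / (1 + (cosh (2 * x))⁻¹) = cosh (2 * x) / cosh x ^ 2 := by
    field_simp
    linear_combination cosh_sq x - cosh_two_mul x
  rw [sqrt_one_sub_tanh_sq, hcosh, log_div hc2.ne' (by positivity), log_pow, Nat.cast_ofNat]

theorem stmt10 (s : ℝ) :
    HasSum (fun ℓ : ℕ =>
        (1 / 4) * ((Real.tanh (2 * s)) ^ 2 / 4) ^ (ℓ + 1) *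
          (Nat.choose (2 * (ℓ + 1)) (ℓ + 1) : ℝ) / (ℓ + 1))
      ((1 / 2) * Real.log (Real.cosh (2 * s)) - Real.log (Real.cosh s)) := by
  have hz : |tanh (2 * s) ^ 2 / 4| < 1 / 4 := by
    rw [abs_of_nonneg (by positivity)]
    have := (sq_lt_one_iff_abs_lt_one _).2 (abs_tanh_lt_one (2 * s))
    linarith
  have h := (hasSum_centralBinom_succ_div_mul_pow hz).mul_left (1 / 4)
  rw [show 1 - 4 * (tanh (2 * s) ^ 2 / 4) = 1 - tanh (2 * s) ^ 2 by ring,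
    log_two_div_one_add_sqrt_one_sub_tanh_two_mul_sq] at h
  rw [show 1 / 2 * log (cosh (2 * s)) - log (cosh s)
      = 1 / 4 * (2 * (log (cosh (2 * s)) - 2 * log (cosh s))) by ring]
  refine h.congr_fun fun ℓ ↦ ?_
  rw [Nat.centralBinom_eq_two_mul_choose]
  ring
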